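/- For the observability matrix $H = (C; CA; \dots; CA^{2N-1})$ with $A = \mathrm{diag}(A_1,\dots,A_N)$, $A_j = \begin{pmatrix}0&1\\-\lambda_j&0\end{pmatrix}$, and $C$ with rows $(c_{s1},0,\dots,c_{sN},0)$, there exist permutations of rows and columns transforming $H$ into the block form $\begin{pmatrix} H' & 0 \\ 0 & H' \end{pmatrix}$ where $H'$ is the $(r+1)N \times N$ matrix stacking the blocks $H_s$, $(H_s)_{n,j} = (-\lambda_j)^{n-1}c_{sj}$; in particular $\mathrm{rank}\,H = 2\,\mathrm{rank}\,H'$. -/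

import Mathlib

/-! Right multiplication by `blockA` moves the position column of each oscillator `j` to its
velocity column and `-λ_j` times the velocity column to its position column. Hence the row
`C_s A^n` lives on the position columns for even `n` and on the velocity columns for odd `n`,
with entries `(-λ_j)^⌊n/2⌋ c_{sj}`. Sorting the rows by the parity of `n` and the columns into
positions and velocities exhibits two copies of `H'` on the diagonal, and rank is additive over
block-diagonal matrices. -/

def blockA (N : ℕ) (lam : Fin N → ℝ) : Matrix (Fin N × Fin 2) (Fin N × Fin 2) ℝ :=
  Matrix.of fun p q =>
    if p.1 = q.1 then
      if p.2 = 0 ∧ q.2 = 1 then 1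
      else if p.2 = 1 ∧ q.2 = 0 then -lam p.1
      else 0
    else 0

def outC (N r : ℕ) (c : Fin (r + 1) → Fin N → ℝ) : Matrix (Fin (r + 1)) (Fin N × Fin 2) ℝ :=
  Matrix.of fun s q => if q.2 = 0 then c s q.1 else 0

def obsMat (N r : ℕ) (lam : Fin N → ℝ) (c : Fin (r + 1) → Fin N → ℝ) :
    Matrix (Fin (2 * N) × Fin (r + 1)) (Fin N × Fin 2) ℝ :=
  Matrix.of fun ns q => (outC N r c * (blockA N lam) ^ (ns.1 : ℕ)) ns.2 q

def stackedH (N r : ℕ) (lam : Fin N → ℝ) (c : Fin (r + 1) → Fin N → ℝ) :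
    Matrix (Fin (r + 1) × Fin N) (Fin N) ℝ :=
  Matrix.of fun sn j => (-lam j) ^ (sn.2 : ℕ) * c sn.1 j

open Matrix

theorem LinearMap.finrank_range_prodMap {K M M₂ M₃ M₄ : Type*} [DivisionRing K]
    [AddCommGroup M] [AddCommGroup M₂] [AddCommGroup M₃] [AddCommGroup M₄]
    [Module K M] [Module K M₂] [Module K M₃] [Module K M₄] [Module.Finite K M] [Module.Finite K M₂]
    (f : M →ₗ[K] M₃) (g : M₂ →ₗ[K] M₄) :
    Module.finrank K (f.prodMap g).range = Module.finrank K f.range + Module.finrank K g.range := by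
  have hsub : (f.range.subtype.prodMap g.range.subtype).range = f.range.prod g.range := by
    simp only [range_prodMap, Submodule.range_subtype]
  rw [range_prodMap, ← hsub, finrank_range_of_inj
    (Subtype.val_injective.prodMap Subtype.val_injective), Module.finrank_prod]

theorem Matrix.rank_fromBlocks_zero_zero {K m n m' n' : Type*} [Field K] [Fintype n] [Fintype n']
    (A : Matrix m n K) (B : Matrix m' n' K) :
    (fromBlocks A 0 0 B).rank = A.rank + B.rank := by
  have hmulVec : (fromBlocks A 0 0 B).mulVecLin =
      ((LinearEquiv.sumArrowLequivProdArrow m m' K K).symm : _ →ₗ[K] _) ∘ₗ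
        A.mulVecLin.prodMap B.mulVecLin ∘ₗ (LinearEquiv.sumArrowLequivProdArrow n n' K K) := by
    ext x (i | i) <;> simp [fromBlocks_mulVec] <;> rfl
  rw [rank, rank, rank, hmulVec, LinearMap.range_comp, LinearEquiv.finrank_map_eq,
    LinearEquiv.range_comp, LinearMap.finrank_range_prodMap]

lemma mul_blockA_apply {ι : Type*} (N : ℕ) (lam : Fin N → ℝ) (M : Matrix ι (Fin N × Fin 2) ℝ)
    (i : ι) (j : Fin N) (b : Fin 2) :
    (M * blockA N lam) i (j, b) = if b = 0 then -lam j * M i (j, 1) else M i (j, 0) := by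
  simp only [mul_apply, Fintype.sum_prod_type, Fin.sum_univ_two, blockA, of_apply]
  fin_cases b <;> simp [Finset.sum_ite_eq', mul_comm]

lemma outC_mul_blockA_pow_apply (N r : ℕ) (lam : Fin N → ℝ) (c : Fin (r + 1) → Fin N → ℝ)
    (k : ℕ) (s : Fin (r + 1)) (j : Fin N) (b : Fin 2) :
    (outC N r c * blockA N lam ^ k) s (j, b) =
      if k % 2 = b then (-lam j) ^ (k / 2) * c s j else 0 := by
  induction k generalizing b with
  | zero => fin_cases b <;> simp [outC]
  | succ k ih =>
    rw [pow_succ, ← Matrix.mul_assoc, mul_blockA_apply, ih, ih]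
    obtain ⟨m, rfl | rfl⟩ := Nat.even_or_odd' k
    · fin_cases b <;> simp [Nat.mul_add_div]
    · have hhalf : (2 * m + 1) / 2 = m := by omega
      rw [show 2 * m + 1 + 1 = 2 * (m + 1) by ring]
      fin_cases b
      · simp [hhalf, pow_succ]
        ring
      · simp

def obsColEquiv (N : ℕ) : Fin N ⊕ Fin N ≃ Fin N × Fin 2 where
  toFun := Sum.elim (·, 0) (·, 1)
  invFun p := if p.2 = 0 then .inl p.1 else .inr p.1
  left_inv := by rintro (j | j) <;> simp
  right_inv := by rintro ⟨j, b⟩; fin_cases b <;> rfl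

/-- Sends `inl (s, m)` to the row `(2m, s)` and `inr (s, m)` to the row `(2m + 1, s)`. -/
def obsRowEquiv (N r : ℕ) :
    (Fin (r + 1) × Fin N) ⊕ (Fin (r + 1) × Fin N) ≃ Fin (2 * N) × Fin (r + 1) :=
  ((Equiv.sumCongr (Equiv.prodComm _ _) (Equiv.prodComm _ _)).trans
    (Equiv.sumProdDistrib _ _ _).symm).trans
    (((obsColEquiv N).trans (finProdFinEquiv.trans (finCongr (mul_comm N 2)))).prodCongr
      (Equiv.refl _))

lemma obsMat_submatrix_eq_fromBlocks (N r : ℕ) (lam : Fin N → ℝ) (c : Fin (r + 1) → Fin N → ℝ) :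
    (obsMat N r lam c).submatrix (obsRowEquiv N r) (obsColEquiv N) =
      fromBlocks (stackedH N r lam c) 0 0 (stackedH N r lam c) := by
  ext (⟨s, m⟩ | ⟨s, m⟩) (j | j) <;>
    simp [obsMat, obsRowEquiv, obsColEquiv, outC_mul_blockA_pow_apply, stackedH,
      Nat.add_mul_div_left]

theorem stmt18 (N r : ℕ) (lam : Fin N → ℝ) (c : Fin (r + 1) → Fin N → ℝ) :
    (∃ (eρ : Fin (2 * N) × Fin (r + 1) ≃ ((Fin (r + 1) × Fin N) ⊕ (Fin (r + 1) × Fin N)))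
       (eτ : Fin N × Fin 2 ≃ (Fin N ⊕ Fin N)),
      obsMat N r lam c
        = (Matrix.fromBlocks (stackedH N r lam c) 0 0 (stackedH N r lam c)).submatrix eρ eτ)
    ∧ (obsMat N r lam c).rank = 2 * (stackedH N r lam c).rank := by
  have hblocks := obsMat_submatrix_eq_fromBlocks N r lam c
  refine ⟨⟨(obsRowEquiv N r).symm, (obsColEquiv N).symm, ?_⟩, ?_⟩
  · rw [← hblocks, submatrix_submatrix, Equiv.self_comp_symm, Equiv.self_comp_symm,
      submatrix_id_id]
  · rw [← rank_submatrix (obsMat N r lam c) (obsRowEquiv N r) (obsColEquiv N), hblocks,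
      rank_fromBlocks_zero_zero, two_mul]
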